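/- arXiv:2107.01447 — 8 statements merged into one kernel-verified Lean document; each statement's English description precedes it below -/
import Mathlib

section
/- For any infinite set A, there exists a family S of subsets of A with |S| = 2^|A| such that S is independent: whenever s₁,…,sₘ,t₁,…,tₙ ∈ S are distinct, the set (A \ s₁) ∪ … ∪ (A \ sₘ) ∪ t₁ ∪ … ∪ tₙ is not equal to A (equivalently, s₁ ∩ … ∩ sₘ ∩ (A\t₁) ∩ … ∩ (A\tₙ) is nonempty). -/
/-!
Index by `B = Finset α × Finset (Finset α)`, which has cardinality `|α|`, and send `X ⊆ α` to the
set of pairs `(F, G)` with `F ∩ X ∈ G`. Given disjoint finite families `P` and `Q`, let `F` contain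
a point separating each `X ∈ P` from each `Y ∈ Q` and let `G` consist of the traces `F ∩ X`,
`X ∈ P`: then `(F, G)` lies in the image of every member of `P` and of no member of `Q`.
-/

open Set

def IsIndependentFamily {ι β : Type*} (f : ι → Set β) : Prop :=
  ∀ P Q : Finset ι, Disjoint P Q → ∃ b, (∀ i ∈ P, b ∈ f i) ∧ ∀ j ∈ Q, b ∉ f j

namespace IsIndependentFamily

variable {ι β γ : Type*} {f : ι → Set β}

theorem injective (hf : IsIndependentFamily f) : Function.Injective f := by
  intro i j hij
  by_contra hne
  obtain ⟨b, hi, hj⟩ := hf {i} {j} (Finset.disjoint_singleton.mpr hne)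
  exact hj j (Finset.mem_singleton_self j) (hij ▸ hi i (Finset.mem_singleton_self i))

theorem preimage (hf : IsIndependentFamily f) {g : γ → β} (hg : Function.Surjective g) :
    IsIndependentFamily fun i => g ⁻¹' f i := by
  intro P Q hPQ
  obtain ⟨b, hP, hQ⟩ := hf P Q hPQ
  obtain ⟨c, rfl⟩ := hg b
  exact ⟨c, hP, hQ⟩

theorem exists_of_subset_range (hf : IsIndependentFamily f) {P Q : Finset (Set β)}
    (hP : (P : Set (Set β)) ⊆ range f) (hQ : (Q : Set (Set β)) ⊆ range f) (hPQ : Disjoint P Q) :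
    ∃ b, (∀ x ∈ P, b ∈ x) ∧ ∀ y ∈ Q, b ∉ y := by
  obtain ⟨b, hbP, hbQ⟩ :=
    hf (P.preimage f hf.injective.injOn) (Q.preimage f hf.injective.injOn)
      (Finset.disjoint_preimage hPQ)
  refine ⟨b, fun x hx => ?_, fun y hy => ?_⟩
  · obtain ⟨i, rfl⟩ := hP hx
    exact hbP i (Finset.mem_preimage.mpr hx)
  · obtain ⟨j, rfl⟩ := hQ hy
    exact hbQ j (Finset.mem_preimage.mpr hy)

end IsIndependentFamily

def traceSet {α : Type*} (X : Set α) : Set (Finset α × Finset (Finset α)) :=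
  {b | ∃ T ∈ b.2, (T : Set α) = ↑b.1 ∩ X}

theorem exists_finset_injOn_inter {α : Type*} (𝒮 : Finset (Set α)) :
    ∃ F : Finset α, InjOn (fun X => (F : Set α) ∩ X) 𝒮 := by
  classical
  cases isEmpty_or_nonempty α
  · exact ⟨∅, fun X _ Y _ _ => Subsingleton.elim X Y⟩
  have separate (X Y : Set α) (hne : X ≠ Y) : ∃ a, ¬(a ∈ X ↔ a ∈ Y) :=
    not_forall.mp (mt Set.ext hne)
  choose! sep hsep using separate
  set F := 𝒮.biUnion fun X => 𝒮.image (sep X)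
  refine ⟨F, fun X hX Y hY htrace => ?_⟩
  by_contra hne
  have hmem : sep X Y ∈ F := Finset.mem_biUnion.mpr ⟨X, hX, Finset.mem_image_of_mem _ hY⟩
  have hsame := Set.ext_iff.mp htrace (sep X Y)
  simp only [mem_inter_iff, Finset.mem_coe, hmem, true_and] at hsame
  exact hsep X Y hne hsame

theorem isIndependentFamily_traceSet (α : Type*) :
    IsIndependentFamily (traceSet : Set α → _) := by
  classical
  intro P Q hPQ
  obtain ⟨F, hF⟩ := exists_finset_injOn_inter (P ∪ Q)
  have trace_coe (X : Set α) : ((F.filter (· ∈ X) : Finset α) : Set α) = ↑F ∩ X :=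
    Finset.coe_filter _ _
  refine ⟨(F, P.image fun X => F.filter (· ∈ X)),
    fun X hX => ⟨_, Finset.mem_image_of_mem _ hX, trace_coe X⟩, fun Y hY => ?_⟩
  rintro ⟨_, hT, hTY⟩
  obtain ⟨X, hX, rfl⟩ := Finset.mem_image.mp hT
  have hXY : X = Y := hF (by simp [hX]) (by simp [hY]) ((trace_coe X).symm.trans hTY)
  exact Finset.disjoint_left.mp hPQ hX (hXY ▸ hY)

theorem mk_finset_prod_finset_finset (α : Type*) [Infinite α] :
    Cardinal.mk (Finset α × Finset (Finset α)) = Cardinal.mk α := by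
  rw [Cardinal.mk_prod, Cardinal.mk_finset_of_infinite, Cardinal.mk_finset_of_infinite]
  simp [Cardinal.mul_eq_self (Cardinal.aleph0_le_mk α)]

theorem union_compl_union_ne_univ_iff {β : Type*} (P Q : Finset (Set β)) :
    ((⋃ x ∈ P, xᶜ) ∪ ⋃ y ∈ Q, y) ≠ univ ↔ ∃ b, (∀ x ∈ P, b ∈ x) ∧ ∀ y ∈ Q, b ∉ y := by
  simp [ne_univ_iff_exists_notMem]

/-- Hausdorff: every infinite set carries an independent family of subsets of
maximal cardinality `2^|A|`. Independence modulo the trivial filter `{A}`: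
for finitely many distinct `s₁,…,sₘ,t₁,…,tₙ` in the family, the union
`s₁ᶜ ∪ … ∪ sₘᶜ ∪ t₁ ∪ … ∪ tₙ` is not all of `A`. -/
theorem stmt_0 (α : Type*) [Infinite α] :
    ∃ S : Set (Set α), Cardinal.mk S = 2 ^ Cardinal.mk α ∧
      ∀ P Q : Finset (Set α), (↑P : Set (Set α)) ⊆ S → (↑Q : Set (Set α)) ⊆ S →
        Disjoint P Q →
        ((⋃ x ∈ P, xᶜ) ∪ ⋃ y ∈ Q, (y : Set α)) ≠ Set.univ := by
  obtain ⟨e⟩ := Cardinal.eq.mp (mk_finset_prod_finset_finset α)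
  have hind := (isIndependentFamily_traceSet α).preimage e.symm.surjective
  refine ⟨range fun X => e.symm ⁻¹' traceSet X, ?_, fun P Q hP hQ hPQ => ?_⟩
  · rw [Cardinal.mk_range_eq _ hind.injective, Cardinal.mk_set]
  · exact (union_compl_union_ne_univ_iff P Q).mpr (hind.exists_of_subset_range hP hQ hPQ)
end

section
/- Let B be a Boolean algebra, F a filter on B, S ⊆ B independent modulo F, and t ∈ S. Suppose there exist distinct s₁,…,sₘ,t₁,…,tₙ ∈ S \ {t} and g ∈ F such that g ∧ z ≤ ¬s₁ ∨ … ∨ ¬sₘ ∨ t₁ ∨ … ∨ tₙ for some z ∈ B. Then S \ {t, s₁,…,sₘ, t₁,…,tₙ} is independent modulo the filter generated by F ∪ {s₁,…,sₘ, ¬t₁,…,¬tₙ}, and this generated filter is proper. -/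
/-- A (proper) filter on a Boolean algebra, as a set. -/
def IsBAFilter {B : Type*} [BooleanAlgebra B] (F : Set B) : Prop :=
  ⊤ ∈ F ∧ ⊥ ∉ F ∧ (∀ x ∈ F, ∀ y : B, x ≤ y → y ∈ F) ∧ ∀ x ∈ F, ∀ y ∈ F, x ⊓ y ∈ F

/-- `S` is independent modulo `F`: for distinct `s₁,…,sₘ,t₁,…,tₙ ∈ S`,
`¬s₁ ∨ … ∨ ¬sₘ ∨ t₁ ∨ … ∨ tₙ ∉ F`. -/
def IndepMod {B : Type*} [BooleanAlgebra B] (S F : Set B) : Prop :=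
  ∀ P Q : Finset B, (↑P : Set B) ⊆ S → (↑Q : Set B) ⊆ S → Disjoint P Q →
    (P.sup (fun x => xᶜ) ⊔ Q.sup id) ∉ F

/-- The filter generated by a set `G`: all elements above a finite meet of
elements of `G`. -/
def filterGen {B : Type*} [BooleanAlgebra B] (G : Set B) : Set B :=
  {b : B | ∃ P : Finset B, (↑P : Set B) ⊆ G ∧ P.inf id ≤ b}

lemma inf_mem_filter {B : Type*} [BooleanAlgebra B] {F : Set B} (hF : IsBAFilter F)
    (T : Finset B) (hT : (↑T : Set B) ⊆ F) : T.inf id ∈ F := by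
  classical
  induction T using Finset.cons_induction with
  | empty => simpa using hF.1
  | cons a s ha ih =>
      rw [Finset.cons_eq_insert, Finset.inf_insert]
      refine hF.2.2.2 a ?_ _ (ih ?_)
      · exact hT (by simp)
      · intro x hx; exact hT (by simp [hx])

lemma sup_compl_eq {B : Type*} [BooleanAlgebra B] (T : Finset B) :
    (T.sup fun x => xᶜ) = (T.inf id)ᶜ := by
  classical
  induction T using Finset.cons_induction with
  | empty => simp
  | cons a s ha ih =>
      rw [Finset.sup_cons, Finset.inf_cons, ih, compl_inf]; rfl

lemma inf_compl_eq {B : Type*} [BooleanAlgebra B] (T : Finset B) :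
    (T.inf fun x => xᶜ) = (T.sup id)ᶜ := by
  classical
  induction T using Finset.cons_induction with
  | empty => simp
  | cons a s ha ih =>
      rw [Finset.inf_cons, Finset.sup_cons, ih, compl_sup]; rfl

/-- Kunen's lemma, second case: if `S` is independent modulo `F`, `t ∈ S`, and
there are distinct `s₁,…,sₘ,t₁,…,tₙ ∈ S \ {t}` (given by disjoint finite sets
`P`, `Q`) and `g ∈ F` with `g ∧ z ≤ ¬s₁ ∨ … ∨ ¬sₘ ∨ t₁ ∨ … ∨ tₙ`, then
`S \ {t,s₁,…,sₘ,t₁,…,tₙ}` is independent modulo the filter generated by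
`F ∪ {s₁,…,sₘ,¬t₁,…,¬tₙ}`, and this filter is proper. -/
theorem stmt_8 {B : Type*} [BooleanAlgebra B] (F S : Set B) (hF : IsBAFilter F)
    (hS : IndepMod S F) (t : B) (ht : t ∈ S)
    (P Q : Finset B) (hP : (↑P : Set B) ⊆ S \ {t}) (hQ : (↑Q : Set B) ⊆ S \ {t})
    (hPQ : Disjoint P Q)
    (g : B) (hg : g ∈ F) (z : B)
    (hle : g ⊓ z ≤ P.sup (fun x => xᶜ) ⊔ Q.sup id) :
    IndepMod (S \ insert t ((↑P : Set B) ∪ ↑Q))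
        (filterGen (F ∪ ↑P ∪ (fun x => xᶜ) '' ↑Q)) ∧
    ⊥ ∉ filterGen (F ∪ ↑P ∪ (fun x => xᶜ) '' ↑Q) := by
  classical
  have main : ∀ P' Q' : Finset B, (↑P' : Set B) ⊆ S \ insert t ((↑P : Set B) ∪ ↑Q) →
      (↑Q' : Set B) ⊆ S \ insert t ((↑P : Set B) ∪ ↑Q) → Disjoint P' Q' →
      (P'.sup (fun x => xᶜ) ⊔ Q'.sup id) ∉
        filterGen (F ∪ ↑P ∪ (fun x => xᶜ) '' ↑Q) := by
    intro P' Q' hP' hQ' hP'Q' hmem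
    obtain ⟨R, hR, hRle⟩ := hmem
    set RF : Finset B := R.filter (· ∈ F) with hRF
    have hfF : RF.inf id ∈ F := by
      apply inf_mem_filter hF
      intro x hx
      simp only [hRF, Finset.coe_filter, Set.mem_setOf_eq] at hx
      exact hx.2
    -- key inequality
    have key : RF.inf id ⊓ (P.inf id ⊓ Q.inf (fun x => xᶜ)) ≤ R.inf id := by
      apply Finset.le_inf
      intro x hx
      rcases hR hx with (hxF | hxP) | hxQ
      · exact le_trans inf_le_left (Finset.inf_le (by simp [hRF, hx, hxF]))
      · exact le_trans (le_trans inf_le_right inf_le_left) (Finset.inf_le (by exact_mod_cast hxP))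
      · obtain ⟨y, hy, rfl⟩ := hxQ
        exact le_trans (le_trans inf_le_right inf_le_right)
          (Finset.inf_le (f := fun x => xᶜ) (by exact_mod_cast hy))
    have key2 : RF.inf id ≤ (P'.sup (fun x => xᶜ) ⊔ Q'.sup id) ⊔
        (P.inf id ⊓ Q.inf (fun x => xᶜ))ᶜ := by
      have h : RF.inf id ⊓ (P.inf id ⊓ Q.inf (fun x => xᶜ)) ≤
          P'.sup (fun x => xᶜ) ⊔ Q'.sup id := le_trans key hRle
      have := sdiff_le_iff.mp (by
        rw [sdiff_eq, compl_compl]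
        exact h :
          RF.inf id \ (P.inf id ⊓ Q.inf (fun x => xᶜ))ᶜ ≤ P'.sup (fun x => xᶜ) ⊔ Q'.sup id)
      exact le_trans this (by rw [sup_comm])
    have hcompl : (P.inf id ⊓ Q.inf (fun x => xᶜ))ᶜ = P.sup (fun x => xᶜ) ⊔ Q.sup id := by
      rw [compl_inf, sup_compl_eq, inf_compl_eq, compl_compl]
    rw [hcompl] at key2
    have key3 : RF.inf id ≤ (P ∪ P').sup (fun x => xᶜ) ⊔ (Q ∪ Q').sup id := by
      rw [Finset.sup_union, Finset.sup_union]
      refine le_trans key2 (sup_le (sup_le ?_ ?_) (sup_le ?_ ?_))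
      · exact le_sup_of_le_left le_sup_right
      · exact le_sup_of_le_right le_sup_right
      · exact le_sup_of_le_left le_sup_left
      · exact le_sup_of_le_right le_sup_left
    have hmemF : (P ∪ P').sup (fun x => xᶜ) ⊔ (Q ∪ Q').sup id ∈ F :=
      hF.2.2.1 _ hfF _ key3
    -- contradiction with independence
    refine hS (P ∪ P') (Q ∪ Q') ?_ ?_ ?_ hmemF
    · rw [Finset.coe_union]
      exact Set.union_subset (fun x hx => (hP hx).1) (fun x hx => (hP' hx).1)
    · rw [Finset.coe_union]
      exact Set.union_subset (fun x hx => (hQ hx).1) (fun x hx => (hQ' hx).1)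
    · rw [Finset.disjoint_union_left]
      constructor <;> rw [Finset.disjoint_union_right]
      · refine ⟨hPQ, ?_⟩
        rw [Finset.disjoint_right]
        intro a ha haP
        exact (hQ' ha).2 (Set.mem_insert_iff.mpr (Or.inr (Or.inl (by exact_mod_cast haP))))
      · constructor
        · rw [Finset.disjoint_left]
          intro a ha haQ
          exact (hP' ha).2 (Set.mem_insert_iff.mpr (Or.inr (Or.inr (by exact_mod_cast haQ))))
        · exact hP'Q'
  constructor
  · intro P' Q' hP' hQ' h
    exact main P' Q' hP' hQ' h
  · intro hbot
    have := main ∅ ∅ (by simp) (by simp) (by simp)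
    simp only [Finset.sup_empty, sup_idem] at this
    exact this (by simpa using hbot)
end

section
/- Let B be a complete Boolean algebra, A = {aᵢ : i < ω} a countable maximal antichain, and S ⊆ P(A) a family of subsets of A that is independent modulo {A} in P(A). Then the family {⋁X : X ∈ S} ⊆ B is independent modulo the trivial filter {1} of B: for distinct X₁,…,Xₘ,Y₁,…,Yₙ ∈ S, ¬⋁X₁ ∨ … ∨ ¬⋁Xₘ ∨ ⋁Y₁ ∨ … ∨ ⋁Yₙ ≠ 1. -/
/-- If `S ⊆ P(A)` is a family of subsets of a countable maximal antichain
`A = {aᵢ : i < ω}` of a complete Boolean algebra, independent modulo `{A}` in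
`P(A)`, then `{⋁X : X ∈ S}` is independent modulo the trivial filter `{1}`:
for distinct `X₁,…,Xₘ,Y₁,…,Yₙ ∈ S`,
`¬⋁X₁ ∨ … ∨ ¬⋁Xₘ ∨ ⋁Y₁ ∨ … ∨ ⋁Yₙ ≠ 1`. -/
theorem stmt_9 {B : Type*} [CompleteBooleanAlgebra B] (a : ℕ → B)
    (hinj : Function.Injective a) (h0 : ∀ i, a i ≠ ⊥)
    (hd : ∀ i j, i ≠ j → a i ⊓ a j = ⊥) (htop : (⨆ i, a i) = ⊤)
    (S : Set (Set B)) (hSA : ∀ X ∈ S, X ⊆ Set.range a)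
    (hind : ∀ P Q : Finset (Set B), (↑P : Set (Set B)) ⊆ S → (↑Q : Set (Set B)) ⊆ S →
      Disjoint P Q →
      ((⋃ X ∈ P, Set.range a \ X) ∪ ⋃ Y ∈ Q, (Y : Set B)) ≠ Set.range a) :
    ∀ P Q : Finset (Set B), (↑P : Set (Set B)) ⊆ S → (↑Q : Set (Set B)) ⊆ S →
      Disjoint P Q →
      (P.sup (fun X => (sSup X)ᶜ) ⊔ Q.sup (fun Y => sSup Y)) ≠ ⊤ := by
  intro P Q hP hQ hPQ
  have hne := hind P Q hP hQ hPQ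
  -- the union is a subset of `range a`
  have hsub : ((⋃ X ∈ P, Set.range a \ X) ∪ ⋃ Y ∈ Q, (Y : Set B)) ⊆ Set.range a := by
    apply Set.union_subset
    · exact Set.iUnion₂_subset fun X _ => Set.diff_subset
    · exact Set.iUnion₂_subset fun Y hY => hSA Y (hQ hY)
  -- find an element of `range a` not in the union
  obtain ⟨b, hbr, hbn⟩ : ∃ b ∈ Set.range a,
      b ∉ ((⋃ X ∈ P, Set.range a \ X) ∪ ⋃ Y ∈ Q, (Y : Set B)) := by
    by_contra h
    push_neg at h
    exact hne (Set.Subset.antisymm hsub h)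
  obtain ⟨i, rfl⟩ := hbr
  have hnotP : ∀ X ∈ P, a i ∈ X := by
    intro X hX
    by_contra hx
    exact hbn (Or.inl (Set.mem_biUnion hX ⟨⟨i, rfl⟩, hx⟩))
  have hnotQ : ∀ Y ∈ Q, a i ∉ Y := by
    intro Y hY hy
    exact hbn (Or.inr (Set.mem_biUnion hY hy))
  -- the whole expression is ≤ (a i)ᶜ
  intro htopeq
  have hle : (P.sup (fun X => (sSup X)ᶜ) ⊔ Q.sup (fun Y => sSup Y)) ≤ (a i)ᶜ := by
    apply sup_le
    · apply Finset.sup_le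
      intro X hX
      exact compl_le_compl (le_sSup (hnotP X hX))
    · apply Finset.sup_le
      intro Y hY
      apply sSup_le
      intro b hb
      obtain ⟨j, rfl⟩ := hSA Y (hQ hY) hb
      have hij : i ≠ j := by
        rintro rfl
        exact hnotQ Y hY hb
      exact le_compl_iff_disjoint_left.mpr (disjoint_iff.mpr (hd i j hij))
  rw [htopeq, top_le_iff, ← compl_bot, compl_inj_iff] at hle
  exact h0 i hle
end

section
/- Let S' be a set of elements of a complete Boolean algebra B such that S' is independent modulo {1}. Then the filter U₀ generated by S' ∪ {¬⋀I : I ⊆ S' infinite} is a proper filter, and every infinite subset I of S' satisfies ⋀I ∉ U₀. Hence if |S'| = |B|, any ultrafilter extending U₀ is Tukey-maximal. -/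
/-- An ultrafilter on a Boolean algebra. -/
def IsUltra {B : Type*} [BooleanAlgebra B] (U : Set B) : Prop :=
  IsBAFilter U ∧ ∀ x : B, x ∈ U ∨ xᶜ ∈ U

/-! Every finite meet of generators of `U₀` lies above a nonzero "cell"
`a₁ ⊓ … ⊓ aₘ ⊓ b₁ᶜ ⊓ … ⊓ bₙᶜ` of `S'`: each generator `(⋀ I)ᶜ` lies above `sᶜ` for any
`s ∈ I`, and since `I` is infinite, `s` can be chosen outside the finitely many elements of
`S'` already used. Such a cell is below no infinite meet `⋀ I`, as one more `c ∈ I`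
unused by the cell would give `cell ⊓ cᶜ = ⊥`, against independence. So `U₀` is proper and
misses every `⋀ I`; and `X = S'` witnesses Tukey-maximality, since `U₀` contains `(⋀ I)ᶜ`. -/

section BooleanAlgebra

variable {B : Type*} [BooleanAlgebra B]

theorem subset_filterGen (G : Set B) : G ⊆ filterGen G :=
  fun x hx => ⟨{x}, by simpa using hx, by simp⟩

theorem IsBAFilter.compl_notMem {F : Set B} (hF : IsBAFilter F) {x : B} (hx : x ∈ F) :
    xᶜ ∉ F := fun hxc => hF.2.1 (inf_compl_self x ▸ hF.2.2.2 x hx xᶜ hxc)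

def IndepModTop (S : Set B) : Prop :=
  ∀ P Q : Finset B, (↑P : Set B) ⊆ S → (↑Q : Set B) ⊆ S → Disjoint P Q →
    (P.sup (fun x => xᶜ) ⊔ Q.sup id) ≠ ⊤

theorem IndepModTop.inf_inf_compl_ne_bot {S : Set B} (hS : IndepModTop S) {A Q : Finset B}
    (hA : (↑A : Set B) ⊆ S) (hQ : (↑Q : Set B) ⊆ S) (hAQ : Disjoint A Q) :
    A.inf id ⊓ Q.inf compl ≠ ⊥ := by
  intro h
  apply hS A Q hA hQ hAQ
  have hcompl := congrArg compl h
  simp only [compl_inf, Finset.compl_inf, compl_bot, id, compl_compl] at hcompl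
  exact hcompl

end BooleanAlgebra

section CompleteBooleanAlgebra

variable {B : Type*} [CompleteBooleanAlgebra B]

def withComplInfiniteMeets (S : Set B) : Set B :=
  S ∪ {x | ∃ I ⊆ S, I.Infinite ∧ x = (sInf I)ᶜ}

theorem exists_compl_le_of_mem_withComplInfiniteMeets {S : Set B} {q : B}
    (hq : q ∈ withComplInfiniteMeets S) (hqS : q ∉ S) (A : Finset B) :
    ∃ s ∈ S, s ∉ A ∧ sᶜ ≤ q := by
  obtain hqS' | ⟨I, hIS, hI, rfl⟩ := hq
  · exact absurd hqS' hqS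
  obtain ⟨s, hsI, hsA⟩ := (hI.sdiff A.finite_toSet).nonempty
  exact ⟨s, hIS hsI, hsA, compl_le_compl (sInf_le hsI)⟩

theorem exists_inf_inf_compl_le_of_subset_withComplInfiniteMeets {S : Set B} {P : Finset B}
    (hP : (↑P : Set B) ⊆ withComplInfiniteMeets S) :
    ∃ A Q : Finset B, (↑A : Set B) ⊆ S ∧ (↑Q : Set B) ⊆ S ∧ Disjoint A Q ∧
      A.inf id ⊓ Q.inf compl ≤ P.inf id := by
  classical
  set A := P.filter (· ∈ S)
  have hchoice : ∀ q ∈ P.filter (· ∉ S), ∃ s ∈ S, s ∉ A ∧ sᶜ ≤ q := fun q hq =>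
    have hq' := Finset.mem_filter.mp hq
    exists_compl_le_of_mem_withComplInfiniteMeets (hP hq'.1) hq'.2 A
  choose! f hfS hfA hf using hchoice
  refine ⟨A, (P.filter (· ∉ S)).image f, fun a ha => (Finset.mem_filter.mp ha).2, ?_, ?_, ?_⟩
  · rw [Finset.coe_image, Set.image_subset_iff]
    exact hfS
  · refine Finset.disjoint_right.mpr fun a ha haA => ?_
    obtain ⟨q, hq, rfl⟩ := Finset.mem_image.mp ha
    exact hfA q hq haA
  · rw [Finset.inf_image]
    calc A.inf id ⊓ (P.filter (· ∉ S)).inf (compl ∘ f)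
        ≤ A.inf id ⊓ (P.filter (· ∉ S)).inf id := inf_le_inf le_rfl (Finset.inf_mono_fun hf)
      _ = P.inf id := by rw [← Finset.inf_union, Finset.filter_union_filter_not_eq]

theorem IndepModTop.inf_inf_compl_not_le_sInf {S : Set B} (hS : IndepModTop S)
    {A Q : Finset B} (hA : (↑A : Set B) ⊆ S) (hQ : (↑Q : Set B) ⊆ S) (hAQ : Disjoint A Q)
    {I : Set B} (hIS : I ⊆ S) (hI : I.Infinite) :
    ¬ A.inf id ⊓ Q.inf compl ≤ sInf I := by
  classical
  intro hle
  obtain ⟨c, hcI, hcAQ⟩ := (hI.sdiff (A.finite_toSet.union Q.finite_toSet)).nonempty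
  simp only [Set.mem_union, Finset.mem_coe, not_or] at hcAQ
  have hcQ : (↑(insert c Q) : Set B) ⊆ S := by
    simpa [Set.insert_subset_iff] using ⟨hIS hcI, hQ⟩
  have hAcQ : Disjoint A (insert c Q) := Finset.disjoint_insert_right.mpr ⟨hcAQ.1, hAQ⟩
  apply hS.inf_inf_compl_ne_bot hA hcQ hAcQ
  rw [← le_bot_iff, Finset.inf_insert, ← inf_compl_self c]
  exact le_inf ((inf_le_inf le_rfl inf_le_right).trans (hle.trans (sInf_le hcI)))
    (inf_le_right.trans inf_le_left)

theorem IndepModTop.bot_notMem_filterGen {S : Set B} (hS : IndepModTop S) :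
    ⊥ ∉ filterGen (withComplInfiniteMeets S) := by
  rintro ⟨P, hP, hle⟩
  obtain ⟨A, Q, hA, hQ, hAQ, hAQP⟩ := exists_inf_inf_compl_le_of_subset_withComplInfiniteMeets hP
  exact hS.inf_inf_compl_ne_bot hA hQ hAQ (le_bot_iff.mp (hAQP.trans hle))

theorem IndepModTop.sInf_notMem_filterGen {S : Set B} (hS : IndepModTop S) {I : Set B}
    (hIS : I ⊆ S) (hI : I.Infinite) :
    sInf I ∉ filterGen (withComplInfiniteMeets S) := by
  rintro ⟨P, hP, hle⟩
  obtain ⟨A, Q, hA, hQ, hAQ, hAQP⟩ := exists_inf_inf_compl_le_of_subset_withComplInfiniteMeets hP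
  exact hS.inf_inf_compl_not_le_sInf hA hQ hAQ hIS hI (hAQP.trans hle)

end CompleteBooleanAlgebra

/-- If `S'` is independent modulo `{1}` in a complete Boolean algebra `B`,
then the filter `U₀` generated by `S' ∪ {¬⋀I : I ⊆ S' infinite}` is proper,
every infinite `I ⊆ S'` has `⋀I ∉ U₀`, and if `|S'| = |B|` then every
ultrafilter extending `U₀` is Tukey-maximal: it contains a set `X` of size
`|B|` all of whose infinite subsets have meet outside the ultrafilter. -/
theorem stmt_10 {B : Type*} [CompleteBooleanAlgebra B] (S' : Set B)
    (hind : ∀ P Q : Finset B, (↑P : Set B) ⊆ S' → (↑Q : Set B) ⊆ S' → Disjoint P Q →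
      (P.sup (fun x => xᶜ) ⊔ Q.sup id) ≠ ⊤) :
    ⊥ ∉ filterGen (S' ∪ {x : B | ∃ I ⊆ S', I.Infinite ∧ x = (sInf I)ᶜ}) ∧
    (∀ I ⊆ S', I.Infinite →
      sInf I ∉ filterGen (S' ∪ {x : B | ∃ I' ⊆ S', I'.Infinite ∧ x = (sInf I')ᶜ})) ∧
    (Cardinal.mk S' = Cardinal.mk B →
      ∀ U : Set B, IsUltra U →
        filterGen (S' ∪ {x : B | ∃ I ⊆ S', I.Infinite ∧ x = (sInf I)ᶜ}) ⊆ U →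
        ∃ X ⊆ U, Cardinal.mk X = Cardinal.mk B ∧ ∀ Y ⊆ X, Y.Infinite → sInf Y ∉ U) := by
  have hS : IndepModTop S' := hind
  refine ⟨hS.bot_notMem_filterGen, fun I hIS hI => hS.sInf_notMem_filterGen hIS hI, ?_⟩
  intro hcard U hU hU₀
  have hG : withComplInfiniteMeets S' ⊆ U := (subset_filterGen _).trans hU₀
  refine ⟨S', fun s hs => hG (Or.inl hs), hcard, fun Y hYS hY hYU => ?_⟩
  exact hU.1.compl_notMem hYU (hG (Or.inr ⟨Y, hYS, hY, rfl⟩))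
end

section
/- Let B be a complete Boolean algebra with a fixed countable maximal antichain A₀ = {aᵢ : i < ω}, and let F = {b ∈ B : {i : aᵢ ∧ ¬b > 0} is finite}. Suppose given for each n < ω a countable maximal antichain Aₙ and a bijection fₙ : Aₙ → Aₙ with fₙ = fₙ⁻¹, where f₀ is the identity on A₀, and such that for m < n, ⋁{b ∈ Aₙ : ∃a ∈ Aₘ (b ≤ a and fₙ(b) ≤ fₘ(a))} ∈ F. Then there exist a countable maximal antichain A_∞ and a bijection f_∞ : A_∞ → A_∞ with f_∞ = f_∞⁻¹ such that for every n < ω, ⋁{b ∈ A_∞ : ∃a ∈ Aₙ (b ≤ a and f_∞(b) ≤ fₙ(a))} ∈ F. -/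
/-- Lemma on limit stages: given countable maximal antichains `Aₙ` with
involutive bijections `fₙ : Aₙ → Aₙ` coherent modulo the filter `F` determined
by the countable maximal antichain `A₀ = {aᵢ : i < ω}` (with `f₀` the
identity), there are a countable maximal antichain `A_∞` and an involutive
bijection `f_∞ : A_∞ → A_∞` coherent with every `fₙ` modulo `F`. -/
theorem stmt_13 {B : Type*} [CompleteBooleanAlgebra B] (a : ℕ → B)
    (hinj : Function.Injective a) (h0 : ∀ i, a i ≠ ⊥)
    (hd : ∀ i j, i ≠ j → a i ⊓ a j = ⊥) (htop : (⨆ i, a i) = ⊤)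
    (F : Set B) (hF : F = {b : B | {i : ℕ | a i ⊓ bᶜ ≠ ⊥}.Finite})
    (A : ℕ → Set B) (f : ℕ → B → B)
    (hA0 : A 0 = Set.range a) (hf0 : ∀ x ∈ A 0, f 0 x = x)
    (hAcnt : ∀ n, (A n).Countable)
    (hAmax : ∀ n, (∀ x ∈ A n, x ≠ ⊥) ∧ ((A n).Pairwise fun x y => x ⊓ y = ⊥) ∧
      sSup (A n) = ⊤)
    (hbij : ∀ n, Set.BijOn (f n) (A n) (A n))
    (hinv : ∀ n, ∀ x ∈ A n, f n (f n x) = x)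
    (hcoh : ∀ m n : ℕ, m < n →
      sSup {b : B | b ∈ A n ∧ ∃ x ∈ A m, b ≤ x ∧ f n b ≤ f m x} ∈ F) :
    ∃ (Ainf : Set B) (g : B → B), Ainf.Countable ∧
      (∀ x ∈ Ainf, x ≠ ⊥) ∧ (Ainf.Pairwise fun x y => x ⊓ y = ⊥) ∧ sSup Ainf = ⊤ ∧
      Set.BijOn g Ainf Ainf ∧ (∀ x ∈ Ainf, g (g x) = x) ∧
      ∀ n : ℕ, sSup {b : B | b ∈ Ainf ∧ ∃ x ∈ A n, b ≤ x ∧ g b ≤ f n x} ∈ F := by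
  classical
  -- basic Boolean algebra fact
  have hbot : ∀ {x y : B}, x ⊓ yᶜ = ⊥ ↔ x ≤ y := by
    intro x y; rw [← sdiff_eq, sdiff_eq_bot_iff]
  -- the coherence suprema
  set c : ℕ → ℕ → B :=
    fun m n => sSup {b : B | b ∈ A n ∧ ∃ x ∈ A m, b ≤ x ∧ f n b ≤ f m x} with hc
  have hcfin : ∀ m n, m < n → {i : ℕ | ¬ a i ≤ c m n}.Finite := by
    intro m n hmn
    have h2 := hcoh m n hmn
    rw [hF] at h2
    refine h2.subset fun i hi => ?_
    simp only [Set.mem_setOf_eq] at hi ⊢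
    exact fun he => hi (hbot.mp he)
  -- choice of levels
  set nn : ℕ → ℕ := fun i => Nat.findGreatest (fun N => ∀ m, m < N → a i ≤ c m N) i
    with hnn
  have hgood : ∀ i, ∀ m, m < nn i → a i ≤ c m (nn i) := fun i =>
    Nat.findGreatest_spec (P := fun N => ∀ m, m < N → a i ≤ c m N) (Nat.zero_le i)
      (fun m hm => absurd hm (Nat.not_lt_zero m))
  have hnnfin : ∀ N, {i : ℕ | nn i < N}.Finite := by
    intro N
    have hsub : {i : ℕ | nn i < N} ⊆
        Set.Iio N ∪ ⋃ n ∈ Set.Iic N, ⋃ m ∈ Set.Iio n, {i : ℕ | ¬ a i ≤ c m n} := by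
      intro i hi
      by_contra hcon
      simp only [Set.mem_union, Set.mem_Iio, Set.mem_iUnion, Set.mem_Iic,
        Set.mem_setOf_eq, not_or, not_exists, not_not] at hcon
      obtain ⟨hiN, hall⟩ := hcon
      have hP : ∀ m, m < N → a i ≤ c m N := fun m hm => hall N le_rfl m hm
      have : N ≤ nn i := Nat.le_findGreatest (le_of_not_gt hiN) hP
      exact absurd hi (by simp only [Set.mem_setOf_eq]; omega)
    refine Set.Finite.subset ?_ hsub
    refine (Set.finite_Iio N).union ((Set.finite_Iic N).biUnion fun n _ =>
      (Set.finite_Iio n).biUnion fun m hm => hcfin m n hm)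
  -- the pieces
  set S : ℕ → Set B :=
    fun i => {b : B | b ∈ A (nn i) ∧ b ≤ a i ∧ f (nn i) b ≤ a i} with hS
  -- membership in a subantichain sup
  have key : ∀ (n : ℕ) (T : Set B), T ⊆ A n → ∀ b ∈ A n, b ≠ ⊥ → b ≤ sSup T → b ∈ T := by
    intro n T hT b hb hbne hle
    by_contra hbT
    apply hbne
    have hb2 : b = b ⊓ sSup T := (inf_eq_left.mpr hle).symm
    rw [inf_sSup_eq] at hb2
    rw [hb2]
    refine le_bot_iff.mp (iSup₂_le fun x hx => ?_)
    have hne : b ≠ x := fun h => hbT (h ▸ hx)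
    exact ((hAmax n).2.1 hb (hT hx) hne).le
  -- each a i is covered by its pieces
  have haS : ∀ i, a i ≤ sSup (S i) := by
    intro i
    rcases Nat.eq_zero_or_pos (nn i) with h00 | hpos
    · refine le_sSup ?_
      have hai : a i ∈ A 0 := by rw [hA0]; exact ⟨i, rfl⟩
      refine ⟨by rw [h00]; exact hai, le_rfl, ?_⟩
      rw [h00, hf0 (a i) hai]
    · have h0le : a i ≤ c 0 (nn i) := hgood i 0 hpos
      have := inf_sSup_eq (s := {b : B | b ∈ A (nn i) ∧
        ∃ x ∈ A 0, b ≤ x ∧ f (nn i) b ≤ f 0 x}) (a := a i)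
      calc a i = a i ⊓ c 0 (nn i) := (inf_eq_left.mpr h0le).symm
        _ ≤ sSup (S i) := by
          rw [hc, inf_sSup_eq]
          refine iSup₂_le fun b hb => ?_
          obtain ⟨hbA, x, hxA, hbx, hfb⟩ := hb
          rw [hA0] at hxA
          obtain ⟨j, rfl⟩ := hxA
          rw [hf0 (a j) (by rw [hA0]; exact ⟨j, rfl⟩)] at hfb
          rcases eq_or_ne i j with rfl | hij
          · exact le_trans inf_le_right (le_sSup ⟨hbA, hbx, hfb⟩)
          · have : a i ⊓ b ≤ a i ⊓ a j := inf_le_inf_left _ hbx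
            rw [hd i j hij] at this
            exact le_trans this bot_le
  -- pieces at distinct indices are distinct
  have hSdisj : ∀ i j x, x ∈ S i → x ∈ S j → i = j := by
    intro i j x hxi hxj
    by_contra hij
    have hxne : x ≠ ⊥ := (hAmax (nn i)).1 x hxi.1
    apply hxne
    have : x ≤ a i ⊓ a j := le_inf hxi.2.1 hxj.2.1
    rw [hd i j hij] at this
    exact le_bot_iff.mp this
  -- the glued map
  set g : B → B := fun x => if h : ∃ i, x ∈ S i then f (nn h.choose) x else x with hg
  have hgSi : ∀ i, ∀ x ∈ S i, g x = f (nn i) x := by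
    intro i x hx
    have hex : ∃ j, x ∈ S j := ⟨i, hx⟩
    have : hex.choose = i := hSdisj _ _ _ hex.choose_spec hx
    rw [hg]; simp only [dif_pos hex, this]
  have hmapS : ∀ i, ∀ x ∈ S i, f (nn i) x ∈ S i := by
    intro i x hx
    refine ⟨(hbij (nn i)).mapsTo hx.1, hx.2.2, ?_⟩
    rw [hinv (nn i) x hx.1]; exact hx.2.1
  set Ainf : Set B := ⋃ i, S i with hAinf
  have hmem : ∀ x ∈ Ainf, ∃ i, x ∈ S i := fun x hx => Set.mem_iUnion.mp hx
  have hginv : ∀ x ∈ Ainf, g (g x) = x := by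
    intro x hx
    obtain ⟨i, hxi⟩ := hmem x hx
    rw [hgSi i x hxi, hgSi i _ (hmapS i x hxi), hinv (nn i) x hxi.1]
  have hgmaps : ∀ x ∈ Ainf, g x ∈ Ainf := by
    intro x hx
    obtain ⟨i, hxi⟩ := hmem x hx
    rw [hgSi i x hxi]
    exact Set.mem_iUnion.mpr ⟨i, hmapS i x hxi⟩
  refine ⟨Ainf, g, ?_, ?_, ?_, ?_, ⟨hgmaps, ?_, ?_⟩, hginv, ?_⟩
  · exact Set.countable_iUnion fun i => (hAcnt (nn i)).mono fun b hb => hb.1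
  · intro x hx
    obtain ⟨i, hxi⟩ := hmem x hx
    exact (hAmax (nn i)).1 x hxi.1
  · intro x hx y hy hxy
    obtain ⟨i, hxi⟩ := hmem x hx
    obtain ⟨j, hyj⟩ := hmem y hy
    rcases eq_or_ne i j with rfl | hij
    · exact (hAmax (nn i)).2.1 hxi.1 hyj.1 hxy
    · have : x ⊓ y ≤ a i ⊓ a j := inf_le_inf hxi.2.1 hyj.2.1
      rw [hd i j hij] at this
      exact le_bot_iff.mp this
  · refine le_antisymm le_top ?_
    rw [← htop]
    refine iSup_le fun i => le_trans (haS i) (sSup_le_sSup ?_)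
    exact Set.subset_iUnion S i
  · -- injective on Ainf
    intro x hx y hy hxy
    rw [← hginv x hx, ← hginv y hy, hxy]
  · -- surjective on Ainf
    intro y hy
    exact ⟨g y, hgmaps y hy, hginv y hy⟩
  · -- coherence
    intro N
    rw [hF]
    refine (hnnfin N).subset fun i hi => ?_
    simp only [Set.mem_setOf_eq] at hi ⊢
    by_contra hlt
    push_neg at hlt
    apply hi
    rw [hbot]
    have hSD : S i ⊆ {b : B | b ∈ Ainf ∧ ∃ x ∈ A N, b ≤ x ∧ g b ≤ f N x} := by
      intro b hb
      refine ⟨Set.mem_iUnion.mpr ⟨i, hb⟩, ?_⟩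
      rcases eq_or_lt_of_le hlt with hEq | hlt2
      · exact ⟨b, hEq ▸ hb.1, le_rfl, by rw [hgSi i b hb, ← hEq]⟩
      · have hci : a i ≤ c N (nn i) := hgood i N hlt2
        have hble : b ≤ sSup {b : B | b ∈ A (nn i) ∧
            ∃ x ∈ A N, b ≤ x ∧ f (nn i) b ≤ f N x} := le_trans hb.2.1 hci
        have hbmem := key (nn i) _ (fun b' hb' => hb'.1) b hb.1
          ((hAmax (nn i)).1 b hb.1) hble
        obtain ⟨_, x, hxA, h1, h2⟩ := hbmem
        exact ⟨x, hxA, h1, by rw [hgSi i b hb]; exact h2⟩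
    exact le_trans (haS i) (sSup_le_sSup hSD)
end

section
/- Let B be a complete c.c.c. Boolean algebra and F a filter on B with cof(F) < 𝔡 (the dominating number). For every maximal antichain P in B and every countable family {Xₙ : n < ω} of subsets of P with ⋁Xₙ ∈ F for all n, there exists Y ⊆ P such that F ∪ {⋁Y} has the finite intersection property and Y \ Xₙ is finite for all n < ω. -/
universe u

/-- A maximal antichain in a complete Boolean algebra. -/
def IsBAMaxAntichain {B : Type*} [CompleteBooleanAlgebra B] (A : Set B) : Prop :=
  (∀ x ∈ A, x ≠ ⊥) ∧ (A.Pairwise fun x y => x ⊓ y = ⊥) ∧ sSup A = ⊤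

/-- The cofinality of a filter `F`: the least cardinality of a cofinal subset
of `⟨F,≥⟩`. -/
noncomputable def cofSet {B : Type u} [CompleteBooleanAlgebra B] (F : Set B) :
    Cardinal.{u} :=
  sInf {c : Cardinal.{u} | ∃ C ⊆ F, Cardinal.mk C = c ∧ ∀ u ∈ F, ∃ x ∈ C, x ≤ u}

/-- The dominating number `𝔡`. -/
noncomputable def domNumber : Cardinal.{0} :=
  sInf {c : Cardinal.{0} | ∃ D : Set (ℕ → ℕ), Cardinal.mk D = c ∧
    ∀ f : ℕ → ℕ, ∃ g ∈ D, ∃ N : ℕ, ∀ n ≥ N, f n ≤ g n}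

/-! Since disjointness of the elements of `P` gives `⋁S ⊓ ⋁T ≤ ⋁(S ∩ T)` for `S, T ⊆ P`, the
`Xₙ` may be replaced by the decreasing sets `Zₙ = ⋂_{i ≤ n} Xᵢ`, still with `⋁Zₙ ∈ F`. Code the
countable `P` by natural numbers. For each `c` in a cofinal subset `C` of `F` choose
`k_c(n) ∈ Zₙ` compatible with `c`. As `|C| < 𝔡`, some `f : ℕ → ℕ` is not dominated by any of the
functions `n ↦ code (k_c(n))`, and `Y = ⋃ₙ {p ∈ Zₙ | code p < f n}` works: each `c ∈ C` meets
some `k_c(n) ∈ Y`, and `Y \ Zₘ` lies in the finite set of `p ∈ P` with `code p < f n` for some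
`n < m`. -/

open Filter

theorem sSup_inf_sSup_le_sSup_inter {α : Type*} [Order.Frame α] {P S T : Set α}
    (hP : P.Pairwise fun x y => x ⊓ y = ⊥) (hS : S ⊆ P) (hT : T ⊆ P) :
    sSup S ⊓ sSup T ≤ sSup (S ∩ T) := by
  rw [sSup_inf_sSup]
  refine iSup₂_le fun ⟨x, y⟩ ⟨hx, hy⟩ => ?_
  by_cases hxy : x = y
  · subst hxy
    exact inf_le_left.trans (le_sSup ⟨hx, hy⟩)
  · rw [hP (hS hx) (hT hy) hxy]
    exact bot_le

theorem Set.biInter_le_subset {α : Type*} (X : ℕ → Set α) (n : ℕ) : ⋂ i ≤ n, X i ⊆ X n :=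
  Set.iInter₂_subset (κ := fun i => i ≤ n) n le_rfl

theorem Set.antitone_biInter_le {α : Type*} (X : ℕ → Set α) : Antitone fun n => ⋂ i ≤ n, X i :=
  fun _ _ hmn => Set.biInter_subset_biInter_left fun _ hi => le_trans hi hmn

namespace IsBAFilter

section BooleanAlgebra

variable {B : Type*} [BooleanAlgebra B] {F : Set B}

theorem top_mem (hF : IsBAFilter F) : ⊤ ∈ F := hF.1

theorem ne_bot (hF : IsBAFilter F) {u : B} (hu : u ∈ F) : u ≠ ⊥ :=
  fun h => hF.2.1 (h ▸ hu)

theorem mem_of_le (hF : IsBAFilter F) {u v : B} (hu : u ∈ F) (huv : u ≤ v) : v ∈ F :=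
  hF.2.2.1 u hu v huv

theorem inf_mem (hF : IsBAFilter F) {u v : B} (hu : u ∈ F) (hv : v ∈ F) : u ⊓ v ∈ F :=
  hF.2.2.2 u hu v hv

theorem exists_inf_le_finset_inf (hF : IsBAFilter F) (a : B) (Q : Finset B) :
    (↑Q : Set B) ⊆ insert a F → ∃ u ∈ F, u ⊓ a ≤ Q.inf id := by
  classical
  induction Q using Finset.induction_on with
  | empty => exact fun _ => ⟨⊤, hF.top_mem, by simp⟩
  | @insert b Q _ ih =>
    intro hQ
    obtain ⟨u, hu, hle⟩ := ih ((Finset.coe_subset.mpr (Finset.subset_insert b Q)).trans hQ)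
    rw [Finset.inf_insert]
    rcases hQ (Finset.mem_insert_self b Q) with rfl | hb
    · exact ⟨u, hu, le_inf inf_le_right hle⟩
    · exact ⟨b ⊓ u, hF.inf_mem hb hu,
        le_inf (inf_le_left.trans inf_le_left) ((inf_le_inf_right _ inf_le_right).trans hle)⟩

theorem finset_inf_ne_bot_of_forall_inf_ne_bot (hF : IsBAFilter F) {a : B}
    (ha : ∀ u ∈ F, u ⊓ a ≠ ⊥) (Q : Finset B) (hQ : (↑Q : Set B) ⊆ insert a F) :
    Q.inf id ≠ ⊥ := by
  obtain ⟨u, hu, hle⟩ := hF.exists_inf_le_finset_inf a Q hQ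
  exact fun h => ha u hu (le_bot_iff.mp (h ▸ hle))

end BooleanAlgebra

section CompleteBooleanAlgebra

variable {B : Type*} [CompleteBooleanAlgebra B] {F : Set B}

theorem exists_mem_inf_ne_bot (hF : IsBAFilter F) {S : Set B} (hS : sSup S ∈ F)
    {u : B} (hu : u ∈ F) : ∃ p ∈ S, u ⊓ p ≠ ⊥ := by
  by_contra! h
  refine hF.ne_bot (hF.inf_mem hu hS) ?_
  rw [inf_sSup_eq]
  exact le_bot_iff.mp (iSup₂_le fun p hp => (h p hp).le)

theorem sSup_biInter_mem (hF : IsBAFilter F) {P : Set B}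
    (hP : P.Pairwise fun x y => x ⊓ y = ⊥) {X : ℕ → Set B} (hX : ∀ n, X n ⊆ P)
    (hXF : ∀ n, sSup (X n) ∈ F) (n : ℕ) : sSup (⋂ i ≤ n, X i) ∈ F := by
  induction n with
  | zero => simpa using hXF 0
  | succ n ih =>
    rw [Set.biInter_le_succ]
    exact hF.mem_of_le (hF.inf_mem ih (hXF (n + 1)))
      (sSup_inf_sSup_le_sSup_inter hP ((Set.biInter_le_subset X n).trans (hX n)) (hX (n + 1)))

end CompleteBooleanAlgebra

end IsBAFilter

theorem exists_cofinal_mk_eq_cofSet {B : Type u} [CompleteBooleanAlgebra B] (F : Set B) :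
    ∃ C ⊆ F, Cardinal.mk C = cofSet F ∧ ∀ u ∈ F, ∃ c ∈ C, c ≤ u := by
  obtain ⟨C, hCF, hC, hcof⟩ := csInf_mem (s := {c : Cardinal.{u} | ∃ C ⊆ F,
    Cardinal.mk C = c ∧ ∀ u ∈ F, ∃ x ∈ C, x ≤ u})
    ⟨_, F, subset_rfl, rfl, fun u hu => ⟨u, hu, le_rfl⟩⟩
  exact ⟨C, hCF, hC, hcof⟩

theorem exists_frequently_lt_of_mk_lt_domNumber {ι : Type u} (g : ι → ℕ → ℕ)
    (hι : Cardinal.mk ι < Cardinal.lift.{u} domNumber) :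
    ∃ f : ℕ → ℕ, ∀ i, ∃ᶠ n in atTop, g i n < f n := by
  by_contra! h
  have hdom : domNumber ≤ Cardinal.mk (Set.range g) := by
    refine csInf_le (OrderBot.bddBelow _) ⟨_, rfl, fun f => ?_⟩
    obtain ⟨i, hi⟩ := h f
    obtain ⟨N, hN⟩ := eventually_atTop.mp hi
    exact ⟨g i, ⟨i, rfl⟩, N, hN⟩
  have hrange : Cardinal.lift.{u} (Cardinal.mk (Set.range g)) ≤ Cardinal.mk ι := by
    simpa using Cardinal.mk_range_le_lift (f := g)
  exact (hrange.trans_lt hι).not_ge (Cardinal.lift_le.mpr hdom)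

theorem exists_compatible_pseudoIntersection_of_antitone {B : Type u}
    [CompleteBooleanAlgebra B] {F : Set B} (hF : IsBAFilter F)
    (hcof : cofSet F < Cardinal.lift.{u} domNumber) {P : Set B}
    (hPc : P.Countable) {Z : ℕ → Set B} (hZ : Antitone Z) (hZP : ∀ n, Z n ⊆ P)
    (hZF : ∀ n, sSup (Z n) ∈ F) :
    ∃ Y ⊆ P, (∀ u ∈ F, u ⊓ sSup Y ≠ ⊥) ∧ ∀ n, (Y \ Z n).Finite := by
  obtain ⟨code, hcode⟩ := Set.countable_iff_exists_injOn.mp hPc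
  obtain ⟨C, hCF, hCcard, hCcof⟩ := exists_cofinal_mk_eq_cofSet F
  choose k hkZ hk using fun (c : C) n => hF.exists_mem_inf_ne_bot (hZF n) (hCF c.2)
  obtain ⟨f, hf⟩ := exists_frequently_lt_of_mk_lt_domNumber (fun c n => code (k c n))
    (hCcard ▸ hcof)
  refine ⟨⋃ n, {p ∈ Z n | code p < f n},
    Set.iUnion_subset fun n => (Set.sep_subset _ _).trans (hZP n), fun u hu => ?_, fun m => ?_⟩
  · obtain ⟨c, hcC, hcu⟩ := hCcof u hu
    obtain ⟨n, hn⟩ := (hf ⟨c, hcC⟩).exists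
    have hmem : k ⟨c, hcC⟩ n ∈ ⋃ n, {p ∈ Z n | code p < f n} :=
      Set.mem_iUnion.mpr ⟨n, hkZ _ n, hn⟩
    exact fun h => hk ⟨c, hcC⟩ n (le_bot_iff.mp (h ▸ inf_le_inf hcu (le_sSup hmem)))
  · have hsmall : ∀ n, {p ∈ P | code p < f n}.Finite := fun n =>
      ((Set.finite_Iio (f n)).subset (Set.image_subset_iff.mpr fun _ hp => hp.2)).of_finite_image
        (hcode.mono (Set.sep_subset _ _))
    refine (Set.finite_Iio m |>.biUnion fun n _ => hsmall n).subset ?_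
    rintro p ⟨hpY, hpm⟩
    obtain ⟨n, hpn, hpf⟩ := Set.mem_iUnion.mp hpY
    have hnm : n < m := not_le.mp fun hmn => hpm (hZ hmn hpn)
    exact Set.mem_biUnion hnm ⟨hZP n hpn, hpf⟩

/-- Ketonen/Starý: if `B` is a complete c.c.c. Boolean algebra and `F` a
filter with `cof(F) < 𝔡`, then for every maximal antichain `P` and sets
`Xₙ ⊆ P` with `⋁Xₙ ∈ F`, there is `Y ⊆ P` such that `F ∪ {⋁Y}` has the finite
intersection property and `Y \ Xₙ` is finite for all `n`. -/
theorem stmt_15 {B : Type u} [CompleteBooleanAlgebra B]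
    (hccc : ∀ A : Set B, (∀ x ∈ A, x ≠ ⊥) → (A.Pairwise fun x y => x ⊓ y = ⊥) →
      A.Countable)
    (F : Set B) (hF : IsBAFilter F)
    (hcof : cofSet F < Cardinal.lift.{u} domNumber)
    (P : Set B) (hP : IsBAMaxAntichain P)
    (X : ℕ → Set B) (hX : ∀ n, X n ⊆ P) (hXF : ∀ n, sSup (X n) ∈ F) :
    ∃ Y ⊆ P, (∀ Q : Finset B, (↑Q : Set B) ⊆ insert (sSup Y) F → Q.inf id ≠ ⊥) ∧
      ∀ n, (Y \ X n).Finite := by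
  obtain ⟨hPne, hPpair, -⟩ := hP
  obtain ⟨Y, hYP, hYF, hYfin⟩ := exists_compatible_pseudoIntersection_of_antitone hF hcof
    (hccc P hPne hPpair) (Set.antitone_biInter_le X)
    (fun n => (Set.biInter_le_subset X n).trans (hX n)) (hF.sSup_biInter_mem hPpair hX hXF)
  exact ⟨Y, hYP, hF.finset_inf_ne_bot_of_forall_inf_ne_bot hYF,
    fun n => (hYfin n).subset (Set.sdiff_subset_sdiff_right (Set.biInter_le_subset X n))⟩
end

section
/- Let B be a complete c.c.c. Boolean algebra, U a coherent P-ultrafilter on B, and {aᵢ : i < ω} a countable maximal antichain with U ∩ {aᵢ : i < ω} = ∅. Then for every sequence ⟨xₙ : n < ω⟩ of elements of U there exists y ∈ U such that for each n < ω the set {i < ω : aᵢ ∧ y ∧ ¬xₙ > 0} is finite. -/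
open scoped Function

section Refinement

variable {B ι κ : Type*} [CompleteBooleanAlgebra B]

def refinement (a : ι → B) (c : κ → B) : Set B :=
  {p | p ≠ ⊥ ∧ ∃ i k, p = a i ⊓ c k}

lemma exists_le_of_mem_refinement {a : ι → B} {c : κ → B} {p : B}
    (hp : p ∈ refinement a c) : ∃ i, p ≤ a i := by
  obtain ⟨-, i, k, rfl⟩ := hp
  exact ⟨i, inf_le_left⟩

lemma le_sSup_refinement_inter_Iic {a : ι → B} {c : κ → B} (ha : ⨆ i, a i = ⊤)
    (hc : ⨆ k, c k = ⊤) {b : B} (hb : ∀ k, c k ≤ b ∨ Disjoint (c k) b) :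
    b ≤ sSup (refinement a c ∩ Set.Iic b) := by
  calc b = ⨆ ik : ι × κ, b ⊓ (a ik.1 ⊓ c ik.2) := by
        rw [← inf_iSup_eq, ← iSup_inf_iSup, ha, hc, top_inf_eq, inf_top_eq]
    _ ≤ _ := iSup_le fun ⟨i, k⟩ => by
        rcases hb k with hle | hdisj
        · by_cases h0 : a i ⊓ c k = ⊥
          · simp [h0]
          · exact inf_le_right.trans (le_sSup ⟨⟨h0, i, k, rfl⟩, inf_le_right.trans hle⟩)
        · simp [(hdisj.symm.mono_right inf_le_right).eq_bot]

lemma isBAMaxAntichain_refinement {a : ι → B} {c : κ → B} (ha : Pairwise (Disjoint on a))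
    (ha' : ⨆ i, a i = ⊤) (hc : Pairwise (Disjoint on c)) (hc' : ⨆ k, c k = ⊤) :
    IsBAMaxAntichain (refinement a c) := by
  refine ⟨fun p hp => hp.1, ?_, top_le_iff.1 ?_⟩
  · rintro _ ⟨-, i, k, rfl⟩ _ ⟨-, j, l, rfl⟩ hne
    refine disjoint_iff.1 ?_
    by_cases hij : i = j
    · subst hij
      have hkl : k ≠ l := by
        rintro rfl
        exact hne rfl
      exact (hc hkl).mono inf_le_right inf_le_right
    · exact (ha hij).mono inf_le_left inf_le_left
  · simpa using le_sSup_refinement_inter_Iic ha' hc' (b := ⊤) fun _ => Or.inl le_top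

lemma finite_setOf_inf_sSup_inf_compl_ne_bot {a : ι → B} (ha : Pairwise (Disjoint on a))
    {Y : Set B} (hY : ∀ p ∈ Y, ∃ j, p ≤ a j) {b : B} (hfin : (Y \ Set.Iic b).Finite) :
    {i | a i ⊓ sSup Y ⊓ bᶜ ≠ ⊥}.Finite := by
  refine (hfin.biUnion (t := fun p => {i | a i ⊓ p ≠ ⊥}) fun p hp => ?_).subset fun i hi => ?_
  · obtain ⟨j, hj⟩ := hY p hp.1
    refine (Set.finite_singleton j).subset fun i hi => ?_
    by_contra hij
    exact hi ((ha hij).mono_right hj).eq_bot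
  · by_contra hnot
    simp only [Set.mem_iUnion, not_exists] at hnot
    refine hi (eq_bot_iff.2 ?_)
    rw [inf_sSup_eq, iSup₂_inf_eq]
    refine iSup₂_le fun p hp => ?_
    by_cases hpb : p ≤ b
    · exact (inf_le_inf_right _ (inf_le_right.trans hpb)).trans (inf_compl_self b).le
    · simp [not_not.1 (hnot p ⟨hp, hpb⟩)]

end Refinement

section Layers

variable {B : Type*} [CompleteBooleanAlgebra B] (f : ℕ → B)

def layers : Option ℕ → B
  | none => (⨆ n, f n)ᶜ
  | some k => disjointed f k

lemma pairwise_disjoint_layers : Pairwise (Disjoint on layers f) := by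
  have hlim : ∀ k, Disjoint (layers f none) (layers f (some k)) := fun k =>
    disjoint_compl_left.mono_right ((disjointed_le f k).trans (le_iSup f k))
  rintro (_ | k) (_ | l) hne
  · exact absurd rfl hne
  · exact hlim l
  · exact (hlim k).symm
  · exact disjoint_disjointed f fun hkl => hne (congrArg some hkl)

lemma iSup_layers : ⨆ o, layers f o = ⊤ := by
  rw [iSup_option]
  simp only [layers]
  rw [iSup_disjointed, compl_sup_eq_top]

lemma layers_le_or_disjoint_compl_partialSups (n : ℕ) (o : Option ℕ) :
    layers f o ≤ (partialSups f n)ᶜ ∨ Disjoint (layers f o) (partialSups f n)ᶜ := by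
  rcases o with _ | k
  · exact Or.inl (compl_le_compl (partialSups_le f n _ fun j _ => le_iSup f j))
  rcases le_or_gt k n with hkn | hnk
  · exact Or.inr (disjoint_compl_right.mono_left
      ((disjointed_le f k).trans (le_partialSups_of_le f hkn)))
  · refine Or.inl (Disjoint.le_compl_right (disjoint_sdiff_self_left.mono_right ?_))
    exact partialSups_le f n _ fun j hj => Finset.le_sup (Finset.mem_Iio.2 (hj.trans_lt hnk))

end Layers

namespace IsBAFilter

variable {B : Type*} [BooleanAlgebra B] {U : Set B}

lemma mem_of_le_s16 (hU : IsBAFilter U) {x y : B} (hx : x ∈ U) (hxy : x ≤ y) : y ∈ U :=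
  hU.2.2.1 x hx y hxy

lemma inf_mem_s16 (hU : IsBAFilter U) {x y : B} (hx : x ∈ U) (hy : y ∈ U) : x ⊓ y ∈ U :=
  hU.2.2.2 x hx y hy

lemma compl_partialSups_compl_mem (hU : IsBAFilter U) {x : ℕ → B} (hx : ∀ n, x n ∈ U) (n : ℕ) :
    ((partialSups fun k => (x k)ᶜ) n)ᶜ ∈ U := by
  induction n with
  | zero => simpa using hx 0
  | succ n ih =>
    rw [partialSups_add_one, compl_sup, compl_compl]
    exact hU.inf_mem_s16 ih (hx _)

end IsBAFilter

theorem stmt_16_general {B : Type*} [CompleteBooleanAlgebra B]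
    (U : Set B) (hU : IsUltra U)
    (hPU : ∀ P : Set B, IsBAMaxAntichain P → ∀ X : ℕ → Set B, (∀ n, X n ⊆ P) →
      (∀ n, sSup (X n) ∈ U) → ∃ Y ⊆ P, sSup Y ∈ U ∧ ∀ n, (Y \ X n).Finite)
    (a : ℕ → B)
    (hd : ∀ i j, i ≠ j → a i ⊓ a j = ⊥) (htop : (⨆ i, a i) = ⊤)
    (x : ℕ → B) (hx : ∀ n, x n ∈ U) :
    ∃ y ∈ U, ∀ n : ℕ, {i : ℕ | a i ⊓ y ⊓ (x n)ᶜ ≠ ⊥}.Finite := by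
  set f : ℕ → B := fun k => (x k)ᶜ
  set P := refinement a (layers f)
  have ha : Pairwise (Disjoint on a) := fun i j hij => disjoint_iff.2 (hd i j hij)
  have hP : IsBAMaxAntichain P :=
    isBAMaxAntichain_refinement ha htop (pairwise_disjoint_layers f) (iSup_layers f)
  have hXU : ∀ n, sSup (P ∩ Set.Iic (partialSups f n)ᶜ) ∈ U := fun n =>
    hU.1.mem_of_le_s16 (hU.1.compl_partialSups_compl_mem hx n)
      (le_sSup_refinement_inter_Iic htop (iSup_layers f)
        (layers_le_or_disjoint_compl_partialSups f n))
  obtain ⟨Y, hYP, hYU, hYfin⟩ := hPU P hP _ (fun _ => Set.inter_subset_left) hXU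
  refine ⟨sSup Y, hYU, fun n => ?_⟩
  have hxn : (partialSups f n)ᶜ ≤ x n := compl_le_of_compl_le (le_partialSups f n)
  refine (finite_setOf_inf_sSup_inf_compl_ne_bot ha
      (fun p hp => exists_le_of_mem_refinement (hYP hp))
      ((hYfin n).subset (Set.sdiff_subset_sdiff_right Set.inter_subset_right))).subset
    fun i hi => ne_bot_of_le_ne_bot hi (inf_le_inf_left _ (compl_le_compl hxn))

/-- If `U` is a coherent P-ultrafilter on a complete c.c.c. Boolean algebra
and `{aᵢ : i < ω}` is a countable maximal antichain with `U ∩ {aᵢ} = ∅`, then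
for every sequence `⟨xₙ⟩` from `U` there is `y ∈ U` such that for each `n` the
set `{i : aᵢ ∧ y ∧ ¬xₙ > 0}` is finite. -/
theorem stmt_16 {B : Type*} [CompleteBooleanAlgebra B]
    (hccc : ∀ A : Set B, (∀ x ∈ A, x ≠ ⊥) → (A.Pairwise fun x y => x ⊓ y = ⊥) →
      A.Countable)
    (U : Set B) (hU : IsUltra U)
    (hPU : ∀ P : Set B, IsBAMaxAntichain P → ∀ X : ℕ → Set B, (∀ n, X n ⊆ P) →
      (∀ n, sSup (X n) ∈ U) → ∃ Y ⊆ P, sSup Y ∈ U ∧ ∀ n, (Y \ X n).Finite)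
    (a : ℕ → B) (hinj : Function.Injective a) (h0 : ∀ i, a i ≠ ⊥)
    (hd : ∀ i j, i ≠ j → a i ⊓ a j = ⊥) (htop : (⨆ i, a i) = ⊤)
    (hdisj : U ∩ Set.range a = ∅)
    (x : ℕ → B) (hx : ∀ n, x n ∈ U) :
    ∃ y ∈ U, ∀ n : ℕ, {i : ℕ | a i ⊓ y ⊓ (x n)ᶜ ≠ ⊥}.Finite :=
  stmt_16_general U hU hPU a hd htop x hx
end

section
/- Let B be a complete Boolean algebra and A a maximal antichain. Suppose F and G are filters on B based on A, f : A → A is a bijection with f = f⁻¹ such that for every X ⊆ A, ⋁X ∈ F iff ⋁f[X] ∈ G. If z ∈ B is such that G ∪ {z} has the finite intersection property, and W = {a ∈ A : f(a) ∧ z > 0}, then F ∪ {⋁W} has the finite intersection property. -/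
/-- A filter `F` is based on a maximal antichain `A` if for every `u ∈ F`,
`⋁{a ∈ A : a ≤ u} ∈ F`. -/
def BasedOn {B : Type*} [CompleteBooleanAlgebra B] (F A : Set B) : Prop :=
  ∀ u ∈ F, sSup {x : B | x ∈ A ∧ x ≤ u} ∈ F

def HasFiniteInterProp {α : Type*} [SemilatticeInf α] [OrderBot α] [OrderTop α] (S : Set α) :
    Prop :=
  ∀ Q : Finset α, (↑Q : Set α) ⊆ S → Q.inf id ≠ ⊥

theorem HasFiniteInterProp.not_disjoint_of_insert {α : Type*} [Lattice α] [BoundedOrder α]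
    {S : Set α} {z g : α} (h : HasFiniteInterProp (insert z S)) (hg : g ∈ S) :
    ¬Disjoint g z := by
  classical
  intro hdisj
  refine h {g, z} ?_ ?_
  · simp [Set.insert_subset_iff, hg]
  · simpa [disjoint_iff] using hdisj

theorem IsBAFilter.finset_inf_mem {B : Type*} [BooleanAlgebra B] {F : Set B} (hF : IsBAFilter F)
    {Q : Finset B} (hQ : (↑Q : Set B) ⊆ F) : Q.inf id ∈ F :=
  Finset.inf_induction hF.1 (fun _ h₁ _ h₂ => hF.2.2.2 _ h₁ _ h₂) fun _ hb => hQ hb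

theorem IsBAFilter.hasFiniteInterProp_insert {B : Type*} [BooleanAlgebra B] {F : Set B}
    (hF : IsBAFilter F) {s : B} (hs : ∀ u ∈ F, ¬Disjoint s u) :
    HasFiniteInterProp (insert s F) := by
  classical
  intro Q hQ hbot
  have huF : (Q.erase s).inf id ∈ F :=
    hF.finset_inf_mem fun x hx => (hQ (Finset.mem_of_mem_erase hx)).resolve_left
      (Finset.ne_of_mem_erase hx)
  refine hs _ huF (disjoint_iff.2 (le_bot_iff.1 ?_))
  calc s ⊓ (Q.erase s).inf id = (insert s (Q.erase s)).inf id := by rw [Finset.inf_insert, id]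
    _ ≤ Q.inf id := Finset.inf_mono (Finset.insert_erase_subset s Q)
    _ = ⊥ := hbot

theorem stmt_19_general {B : Type*} [CompleteBooleanAlgebra B] (F G : Set B)
    (hF : IsBAFilter F)
    (A : Set B) (hA : IsBAMaxAntichain A)
    (hFb : BasedOn F A)
    (f : B → B)
    (hcorr : ∀ X ⊆ A, sSup X ∈ F ↔ sSup (f '' X) ∈ G)
    (z : B) (hz : ∀ Q : Finset B, (↑Q : Set B) ⊆ insert z G → Q.inf id ≠ ⊥) :
    ∀ Q : Finset B, (↑Q : Set B) ⊆ insert (sSup {x : B | x ∈ A ∧ f x ⊓ z ≠ ⊥}) F →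
      Q.inf id ≠ ⊥ := by
  refine hF.hasFiniteInterProp_insert fun u hu hdisj => ?_
  set X : Set B := {x : B | x ∈ A ∧ x ≤ u}
  have hGX : sSup (f '' X) ∈ G := (hcorr X fun _ hx => hx.1).1 (hFb u hu)
  refine HasFiniteInterProp.not_disjoint_of_insert hz hGX ?_
  rw [sSup_disjoint_iff]
  rintro _ ⟨a, ⟨haA, hau⟩, rfl⟩
  rw [disjoint_iff]
  by_contra haW
  have ha_le : a ≤ sSup {x | x ∈ A ∧ f x ⊓ z ≠ ⊥} := le_sSup ⟨haA, haW⟩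
  exact hA.1 a haA (disjoint_self.1 (hdisj.mono ha_le hau))

/-- If `F`, `G` are filters based on a maximal antichain `A`, `f : A → A` is
an involutive bijection with `⋁X ∈ F ↔ ⋁f[X] ∈ G` for all `X ⊆ A`, and
`G ∪ {z}` has the finite intersection property, then for
`W = {a ∈ A : f(a) ∧ z > 0}` the family `F ∪ {⋁W}` has the finite
intersection property. -/
theorem stmt_19 {B : Type*} [CompleteBooleanAlgebra B] (F G : Set B)
    (hF : IsBAFilter F) (hG : IsBAFilter G)
    (A : Set B) (hA : IsBAMaxAntichain A)
    (hFb : BasedOn F A) (hGb : BasedOn G A)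
    (f : B → B) (hbij : Set.BijOn f A A) (hinv : ∀ x ∈ A, f (f x) = x)
    (hcorr : ∀ X ⊆ A, sSup X ∈ F ↔ sSup (f '' X) ∈ G)
    (z : B) (hz : ∀ Q : Finset B, (↑Q : Set B) ⊆ insert z G → Q.inf id ≠ ⊥) :
    ∀ Q : Finset B, (↑Q : Set B) ⊆ insert (sSup {x : B | x ∈ A ∧ f x ⊓ z ≠ ⊥}) F →
      Q.inf id ≠ ⊥ :=
  stmt_19_general F G hF A hA hFb f hcorr z hz
end
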